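/- arXiv:math/0606163 — 2 statements merged into one kernel-verified Lean document; each statement's English description precedes it below -/
import Mathlib

section
/- For every integer n ≥ 1, the formal power series F(n,x) = ∑_{k≥0} s(B(n)^k) x^k over ℚ satisfies the functional equation F(n,x) · (1 − x·(F(n−1,−x) + 1)) = 1 + F(n−1,−x), where F(n−1,−x) denotes the series obtained from F(n−1,x) by substituting −x for x. -/
/-- The `(n+1) × (n+1)` 0-1 matrix whose `(i,j)` entry is `1` iff `i + j ≤ n`,
with rational entries. -/
def B (n : ℕ) : Matrix (Fin (n + 1)) (Fin (n + 1)) ℚ :=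
  Matrix.of fun i j => if (i : ℕ) + (j : ℕ) ≤ n then 1 else 0

/-- `s M` is the sum of all entries of the square matrix `M`. -/
def s {n : ℕ} (M : Matrix (Fin n) (Fin n) ℚ) : ℚ := ∑ i, ∑ j, M i j

/-- `F n` is the power series `∑_{k ≥ 0} s(B(n)^k) xᵏ`. -/
noncomputable def F (n : ℕ) : PowerSeries ℚ := PowerSeries.mk fun k => s (B n ^ k)

/-!
Reversing the order of the indices turns `B (n + 1)` into `J - E`, where `J` is the all-ones
matrix and `E` is `B n` padded with a zero last row and column. Since `s (X * J * Y) = s X * s Y`,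
the telescoping expansion of `(J + C) ^ (k + 1) - C ^ (k + 1)` gives the convolution
`s ((J + C) ^ (k + 1)) = s (C ^ (k + 1)) + ∑_{i + j = k} s (C ^ i) * s ((J + C) ^ j)`,
that is `S (J + C) = S C + x * S C * S (J + C)` for `S M = ∑ s (M ^ k) xᵏ`.
For `C = -E` we get `S C = 1 + F (n, -x)`, the `1` coming from the padding's contribution to
`s 1`, and the identity rearranges to the functional equation.
-/

open Finset PowerSeries

theorem pow_succ_sub_pow_succ_eq_sum_antidiagonal {R : Type*} [Ring R] (a c : R) (k : ℕ) :
    a ^ (k + 1) - c ^ (k + 1) = ∑ p ∈ antidiagonal k, c ^ p.1 * (a - c) * a ^ p.2 := by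
  induction k with
  | zero => simp
  | succ k ih =>
    have step : a ^ (k + 2) - c ^ (k + 2) =
        (a - c) * a ^ (k + 1) + c * (a ^ (k + 1) - c ^ (k + 1)) := by
      rw [pow_succ' a (k + 1), pow_succ' c (k + 1)]
      noncomm_ring
    rw [step, ih, Nat.sum_antidiagonal_succ, mul_sum]
    simp only [pow_zero, one_mul, pow_succ', mul_assoc]

namespace Matrix

variable {α : Type*}

theorem submatrix_equiv_pow {m n : Type*} [Fintype m] [Fintype n] [DecidableEq m]
    [DecidableEq n] [Semiring α] (M : Matrix m m α) (e : n ≃ m) (k : ℕ) :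
    M.submatrix e e ^ k = (M ^ k).submatrix e e := by
  simpa [coe_reindexRingEquiv, reindex_apply] using
    (map_pow (reindexRingEquiv α e.symm) M k).symm

variable {N : ℕ}

def padLast [Zero α] (M : Matrix (Fin N) (Fin N) α) : Matrix (Fin (N + 1)) (Fin (N + 1)) α :=
  of fun i j => Fin.lastCases 0 (fun i' => Fin.lastCases 0 (fun j' => M i' j') j) i

section

variable [Zero α] (M : Matrix (Fin N) (Fin N) α)

@[simp] lemma padLast_castSucc_castSucc (i j : Fin N) :
    padLast M i.castSucc j.castSucc = M i j := by
  simp [padLast]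

@[simp] lemma padLast_last_left (j : Fin (N + 1)) : padLast M (Fin.last N) j = 0 := by
  simp [padLast]

@[simp] lemma padLast_last_right (i : Fin (N + 1)) : padLast M i (Fin.last N) = 0 := by
  induction i using Fin.lastCases <;> simp [padLast]

end

lemma padLast_mul [NonUnitalNonAssocSemiring α] (M M' : Matrix (Fin N) (Fin N) α) :
    padLast M * padLast M' = padLast (M * M') := by
  ext i j
  induction i using Fin.lastCases <;> induction j using Fin.lastCases <;>
    simp [mul_apply, Fin.sum_univ_castSucc]

lemma padLast_pow_succ [Semiring α] (M : Matrix (Fin N) (Fin N) α) (k : ℕ) :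
    padLast M ^ (k + 1) = padLast (M ^ (k + 1)) := by
  induction k with
  | zero => simp
  | succ k ih => rw [pow_succ, ih, padLast_mul, ← pow_succ]

lemma sum_padLast [AddCommMonoid α] (M : Matrix (Fin N) (Fin N) α) :
    ∑ i, ∑ j, padLast M i j = ∑ i, ∑ j, M i j := by
  simp [Fin.sum_univ_castSucc]

end Matrix

section

variable {N : ℕ}

def allOnes (N : ℕ) : Matrix (Fin N) (Fin N) ℚ := Matrix.of fun _ _ => 1

lemma s_one : s (1 : Matrix (Fin N) (Fin N) ℚ) = N := by
  simp [s, Matrix.one_apply]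

lemma s_sub (M M' : Matrix (Fin N) (Fin N) ℚ) : s (M - M') = s M - s M' := by
  simp [s]

lemma s_smul (c : ℚ) (M : Matrix (Fin N) (Fin N) ℚ) : s (c • M) = c * s M := by
  simp [s, mul_sum]

lemma s_sum {ι : Type*} (t : Finset ι) (M : ι → Matrix (Fin N) (Fin N) ℚ) :
    s (∑ i ∈ t, M i) = ∑ i ∈ t, s (M i) := by
  simp only [s, Matrix.sum_apply, Finset.sum_comm (s := t)]

lemma s_submatrix (M : Matrix (Fin N) (Fin N) ℚ) (e : Fin N ≃ Fin N) :
    s (M.submatrix e e) = s M :=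
  Fintype.sum_equiv e _ _ fun _ => Fintype.sum_equiv e _ _ fun _ => rfl

lemma s_mul_allOnes_mul (M M' : Matrix (Fin N) (Fin N) ℚ) :
    s (M * allOnes N * M') = s M * s M' := by
  simp only [s, allOnes, Matrix.mul_apply, Matrix.of_apply, mul_one, ← mul_sum, ← sum_mul]
  rw [Finset.sum_comm (f := fun j x => M' x j)]

noncomputable def sumPowSeries (M : Matrix (Fin N) (Fin N) ℚ) : ℚ⟦X⟧ :=
  mk fun k => s (M ^ k)

lemma F_eq_sumPowSeries (n : ℕ) : F n = sumPowSeries (B n) := rfl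

lemma coeff_sumPowSeries (M : Matrix (Fin N) (Fin N) ℚ) (k : ℕ) :
    coeff k (sumPowSeries M) = s (M ^ k) :=
  coeff_mk _ _

lemma sumPowSeries_allOnes_add (C : Matrix (Fin N) (Fin N) ℚ) :
    sumPowSeries (allOnes N + C) =
      sumPowSeries C + X * (sumPowSeries C * sumPowSeries (allOnes N + C)) := by
  ext (_ | k)
  · rw [map_add, coeff_zero_X_mul, add_zero, coeff_sumPowSeries, coeff_sumPowSeries, pow_zero,
      pow_zero]
  · rw [map_add, coeff_succ_X_mul, coeff_mul, coeff_sumPowSeries, coeff_sumPowSeries,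
      ← sub_eq_iff_eq_add', ← s_sub, pow_succ_sub_pow_succ_eq_sum_antidiagonal,
      add_sub_cancel_right, s_sum]
    simp only [coeff_sumPowSeries, s_mul_allOnes_mul]

lemma sumPowSeries_neg (M : Matrix (Fin N) (Fin N) ℚ) :
    sumPowSeries (-M) = rescale (-1) (sumPowSeries M) := by
  ext k
  rw [coeff_rescale, coeff_sumPowSeries, coeff_sumPowSeries, ← neg_one_smul ℚ M, smul_pow,
    s_smul]

lemma sumPowSeries_submatrix (M : Matrix (Fin N) (Fin N) ℚ) (e : Fin N ≃ Fin N) :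
    sumPowSeries (M.submatrix e e) = sumPowSeries M := by
  ext k
  rw [coeff_sumPowSeries, coeff_sumPowSeries, Matrix.submatrix_equiv_pow, s_submatrix]

lemma sumPowSeries_padLast (M : Matrix (Fin N) (Fin N) ℚ) :
    sumPowSeries M.padLast = 1 + sumPowSeries M := by
  ext (_ | k)
  · simp only [map_add, coeff_sumPowSeries, pow_zero, s_one, coeff_zero_one]
    push_cast
    ring
  · rw [map_add, coeff_one, if_neg k.succ_ne_zero, zero_add, coeff_sumPowSeries,
      coeff_sumPowSeries, Matrix.padLast_pow_succ, s, Matrix.sum_padLast, s]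

end

lemma B_succ_submatrix_revPerm (m : ℕ) :
    (B (m + 1)).submatrix Fin.revPerm Fin.revPerm = allOnes (m + 2) + -(B m).padLast := by
  ext i j
  induction i using Fin.lastCases <;> induction j using Fin.lastCases <;>
    simp [B, allOnes]
  split_ifs <;> norm_num <;> omega

theorem F_functional_equation (n : ℕ) (hn : 1 ≤ n) :
    F n * (1 - PowerSeries.X * (PowerSeries.rescale (-1) (F (n - 1)) + 1))
      = 1 + PowerSeries.rescale (-1) (F (n - 1)) := by
  obtain ⟨m, rfl⟩ := Nat.exists_eq_add_of_le' hn
  have key := sumPowSeries_allOnes_add (-(B m).padLast)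
  rw [sumPowSeries_neg, sumPowSeries_padLast, ← B_succ_submatrix_revPerm, sumPowSeries_submatrix,
    map_add, map_one, ← F_eq_sumPowSeries, ← F_eq_sumPowSeries] at key
  rw [Nat.add_sub_cancel]
  linear_combination key
end

section
/- Define the sequence of polynomials q_0(x) = 1 and q_n(x) = Q_{n−1}(x) for n ≥ 1. Then, as formal power series in y with coefficients in ℚ[x], (∑_{n≥0} q_n(x) y^n) · (1 − y²·(2 − x² − y²)) = (1 + y)·(1 − x y − y²). -/
/-- `Q n = det (I - x • B(n))`, a polynomial with rational coefficients. -/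
noncomputable def Q (n : ℕ) : Polynomial ℚ :=
  ((1 : Matrix (Fin (n + 1)) (Fin (n + 1)) (Polynomial ℚ))
    - (Polynomial.X : Polynomial ℚ) • (B n).map (Polynomial.C ·)).det

/-- `q 0 = 1` and `q (n+1) = Q n`. -/
noncomputable def q : ℕ → Polynomial ℚ
  | 0 => 1
  | n + 1 => Q n

/-!
Right-multiplying `1 - x • B(n)` by the unipotent matrix `1 - S`, `S` the subdiagonal shift,
replaces `B(n)` by the exchange matrix `J`, because consecutive columns of `B(n)` differ exactly
on the antidiagonal. Hence `q n = D_n(-x)` with `D_n(c) = det (1 - S + c • J)`, where `q 0 = 1` is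
the empty determinant. Expanding along the first row gives `D_{m+2}(c) = D_m(c) + c D_{m+1}(-c)`,
and eliminating `D(-c)` from three instances gives `q_{n+4} = (2 - x²) q_{n+2} - q_n`. So the
generating function times `1 - (2 - x²) y² + y⁴` is the cubic in `y` fixed by `q_0, …, q_3`.
-/

open Matrix

section ShiftExchange

variable {R : Type*}

variable (R) in
def shiftMatrix [Zero R] [One R] (n : ℕ) : Matrix (Fin n) (Fin n) R :=
  of fun i j => if (i : ℕ) = j + 1 then 1 else 0

variable (R) in
def exchangeMatrix [Zero R] [One R] (n : ℕ) : Matrix (Fin n) (Fin n) R :=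
  of fun i j => if (i : ℕ) + j + 1 = n then 1 else 0

def shiftExchange [Ring R] (n : ℕ) (c : R) : Matrix (Fin n) (Fin n) R :=
  1 - shiftMatrix R n + c • exchangeMatrix R n

lemma shiftExchange_apply [Ring R] (n : ℕ) (c : R) (i j : Fin n) :
    shiftExchange n c i j = (if (i : ℕ) = j then 1 else 0) - (if (i : ℕ) = j + 1 then 1 else 0)
      + (if (i : ℕ) + j + 1 = n then c else 0) := by
  simp [shiftExchange, shiftMatrix, exchangeMatrix, one_apply, Fin.ext_iff]

lemma map_shiftMatrix {S : Type*} [Semiring R] [Semiring S] (f : R →+* S) (n : ℕ) :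
    (shiftMatrix R n).map f = shiftMatrix S n := by
  ext i j; simp [shiftMatrix, apply_ite f]

lemma map_exchangeMatrix {S : Type*} [Semiring R] [Semiring S] (f : R →+* S) (n : ℕ) :
    (exchangeMatrix R n).map f = exchangeMatrix S n := by
  ext i j; simp [exchangeMatrix, apply_ite f]

lemma mul_shiftMatrix_apply [Semiring R] {n : ℕ} (M : Matrix (Fin n) (Fin n) R) (i j : Fin n) :
    (M * shiftMatrix R n) i j = if h : (j : ℕ) + 1 < n then M i ⟨j + 1, h⟩ else 0 := by
  rw [mul_apply]
  split_ifs with h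
  · rw [Finset.sum_eq_single ⟨j + 1, h⟩
      (fun k _ hk => by rw [shiftMatrix, of_apply, if_neg fun h => hk (Fin.ext h), mul_zero])
      (by simp)]
    simp [shiftMatrix]
  · refine Finset.sum_eq_zero fun k _ => ?_
    have : (k : ℕ) ≠ j + 1 := by omega
    simp [shiftMatrix, this]

lemma det_one_sub_shiftMatrix [CommRing R] (n : ℕ) : (1 - shiftMatrix R n).det = 1 := by
  rw [det_of_isLowerTriangular]
  · exact Finset.prod_eq_one fun i _ => by simp [shiftMatrix]
  · intro i j (hij : (i : ℕ) < j)
    have hne : i ≠ j := by rintro rfl; omega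
    have : (i : ℕ) ≠ j + 1 := by omega
    simp [shiftMatrix, one_apply_ne hne, this]

lemma det_eq_det_submatrix_castSucc [CommRing R] {k : ℕ}
    (M : Matrix (Fin (k + 1)) (Fin (k + 1)) R)
    (hM : ∀ i, M i (Fin.last k) = if i = Fin.last k then 1 else 0) :
    M.det = (M.submatrix Fin.castSucc Fin.castSucc).det := by
  rw [det_succ_column M (Fin.last k),
    Finset.sum_eq_single (Fin.last k) (fun i _ hi => by simp [hM, hi]) (by simp)]
  simp [hM, Fin.succAbove_last, ← two_mul]

lemma det_shiftExchange_one [CommRing R] (c : R) : (shiftExchange 1 c).det = 1 + c := by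
  simp [shiftExchange_apply]

lemma det_shiftExchange_add_two [CommRing R] (m : ℕ) (c : R) :
    (shiftExchange (m + 2) c).det
      = (shiftExchange m c).det + c * (shiftExchange (m + 1) (-c)).det := by
  have minor_zero : ((shiftExchange (m + 2) c).submatrix Fin.succ Fin.succ).det
      = (shiftExchange m c).det := by
    rw [det_eq_det_submatrix_castSucc _ fun i => ?_]
    · congr 1
      ext i j
      simp only [submatrix_apply, shiftExchange_apply, Fin.val_succ, Fin.val_castSucc]
      split_ifs <;> first | omega | ring
    · simp only [submatrix_apply, shiftExchange_apply, Fin.val_succ, Fin.val_last, Fin.ext_iff]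
      split_ifs <;> first | omega | ring
  have minor_last : (shiftExchange (m + 2) c).submatrix Fin.succ Fin.castSucc
      = -(shiftExchange (m + 1) (-c))ᵀ := by
    ext i j
    simp only [submatrix_apply, Matrix.neg_apply, transpose_apply, shiftExchange_apply,
      Fin.val_succ, Fin.val_castSucc]
    split_ifs <;> first | omega | ring
  have entry_first : shiftExchange (m + 2) c 0 0 = 1 := by simp [shiftExchange_apply]
  have entry_middle (k : Fin m) : shiftExchange (m + 2) c 0 k.castSucc.succ = 0 := by
    simp [shiftExchange_apply, k.isLt.ne]
  have entry_last : shiftExchange (m + 2) c 0 (Fin.last (m + 1)) = c := by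
    simp [shiftExchange_apply]
  have sign_sq : ((-1 : R) ^ (m + 1)) * (-1) ^ (m + 1) = 1 := by rw [← mul_pow]; simp
  rw [det_succ_row_zero, Fin.sum_univ_succ, Fin.sum_univ_castSucc]
  simp only [entry_first, entry_middle, entry_last, mul_zero, zero_mul, Finset.sum_const_zero,
    zero_add, Fin.succ_last, Fin.succAbove_zero, Fin.succAbove_last, minor_zero, minor_last,
    det_neg, det_transpose, Fintype.card_fin, Fin.val_zero, pow_zero, mul_one, Fin.val_succ,
    Fin.val_last, Nat.succ_eq_add_one]
  linear_combination (c * (shiftExchange (m + 1) (-c)).det) * sign_sq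

end ShiftExchange

namespace PowerSeries

variable {R : Type*} [CommRing R]

theorem mk_mul_one_sub_C_mul_X_sq_add_X_pow_four {f : ℕ → R} {a : R}
    (hf : ∀ n, f (n + 4) = a * f (n + 2) - f n) :
    mk f * (1 - C a * X ^ 2 + X ^ 4)
      = C (f 0) + C (f 1) * X + C (f 2 - a * f 0) * X ^ 2 + C (f 3 - a * f 1) * X ^ 3 := by
  ext n
  rw [mul_add, mul_sub, mul_one, mul_left_comm]
  rcases n with _ | _ | _ | _ | n
  all_goals simp [coeff_mul_X_pow', coeff_C, hf]

end PowerSeries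

open Polynomial

lemma B_mul_one_sub_shiftMatrix (n : ℕ) :
    B n * (1 - shiftMatrix ℚ (n + 1)) = exchangeMatrix ℚ (n + 1) := by
  ext i j
  rw [mul_sub, mul_one, Matrix.sub_apply, mul_shiftMatrix_apply]
  have := i.isLt
  have := j.isLt
  simp only [B, exchangeMatrix, of_apply]
  split_ifs <;> first | omega | ring

lemma Q_eq_det_shiftExchange (n : ℕ) : Q n = (shiftExchange (n + 1) (-X : ℚ[X])).det := by
  have factor : (1 - (X : ℚ[X]) • (B n).map C) * (1 - shiftMatrix ℚ[X] (n + 1))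
      = shiftExchange (n + 1) (-X) := by
    have hB :
        (B n).map C * (1 - shiftMatrix ℚ[X] (n + 1)) = exchangeMatrix ℚ[X] (n + 1) := by
      simpa only [map_mul, map_sub, map_one, RingHom.mapMatrix_apply, map_shiftMatrix,
        map_exchangeMatrix] using
        congrArg (C : ℚ →+* ℚ[X]).mapMatrix (B_mul_one_sub_shiftMatrix n)
    rw [sub_mul, one_mul, smul_mul_assoc, hB, shiftExchange, neg_smul, sub_eq_add_neg]
  rw [Q, ← mul_one (det _), ← det_one_sub_shiftMatrix (R := ℚ[X]) (n + 1), ← det_mul, factor]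

lemma q_eq_det_shiftExchange : ∀ n, q n = (shiftExchange n (-X : ℚ[X])).det
  | 0 => by simp [q]
  | n + 1 => Q_eq_det_shiftExchange n

lemma q_add_four (n : ℕ) : q (n + 4) = (2 - X ^ 2) * q (n + 2) - q n := by
  simp only [q_eq_det_shiftExchange]
  have h₁ := det_shiftExchange_add_two (n + 2) (-X : ℚ[X])
  have h₂ := det_shiftExchange_add_two (n + 1) (X : ℚ[X])
  have h₃ := det_shiftExchange_add_two n (-X : ℚ[X])
  rw [neg_neg] at h₁ h₃
  linear_combination h₁ - X * h₂ - h₃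

theorem Q_bivariate_gen_fun :
    (PowerSeries.mk q)
        * (1 - PowerSeries.X ^ 2
            * (PowerSeries.C (R := Polynomial ℚ) (2 - Polynomial.X ^ 2) - PowerSeries.X ^ 2))
      = (1 + PowerSeries.X)
        * (1 - PowerSeries.C (R := Polynomial ℚ) Polynomial.X * PowerSeries.X
            - PowerSeries.X ^ 2) := by
  have q_one : q 1 = 1 - X := by
    rw [q_eq_det_shiftExchange, det_shiftExchange_one, sub_eq_add_neg]
  have q_two : q 2 = 1 - X - X ^ 2 := by
    rw [q_eq_det_shiftExchange, det_shiftExchange_add_two 0, det_fin_zero, det_shiftExchange_one]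
    ring
  have q_three : q 3 = 1 - 2 * X - X ^ 2 + X ^ 3 := by
    rw [q_eq_det_shiftExchange, det_shiftExchange_add_two 1, det_shiftExchange_add_two 0,
      det_fin_zero, det_shiftExchange_one, neg_neg, det_shiftExchange_one]
    ring
  rw [show (1 : PowerSeries ℚ[X])
        - PowerSeries.X ^ 2 * (PowerSeries.C (2 - X ^ 2) - PowerSeries.X ^ 2)
      = 1 - PowerSeries.C (2 - X ^ 2) * PowerSeries.X ^ 2 + PowerSeries.X ^ 4 by ring,
    PowerSeries.mk_mul_one_sub_C_mul_X_sq_add_X_pow_four q_add_four, q_one, q_two, q_three,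
    show q 0 = 1 from rfl]
  simp only [map_one, map_sub, map_add, map_mul, map_pow, map_ofNat]
  ring
end
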